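/- Let α ∈ (0, 1] and let P be a probability distribution over the positive integers. Then for every r ∈ [0, ∞] there exists a sequence of probability distributions P_n over the positive integers with d_TV(P_n, P) → 0 such that lim_{n→∞} H_α(P_n) = H_α(P) + r (with the conventions of arithmetic in [0, ∞]). -/

import Mathlib

/-!
Mix `P` with a uniform distribution on far-away points:
`Pₙ = (1 - Nₙ δₙ) P + δₙ 𝟙[n, n + Nₙ)`, at total variation distance at most `2 Nₙ δₙ` from `P`.
Write `H_α` through `∑ φ(pₖ)` with `φ x = x ^ α` (`α < 1`) or `φ x = -x log x` (`α = 1`).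
Concavity of `φ` (subadditivity), its monotonicity near `0`, and the fact that `φ + id` is
increasing on `[0, 1]` show that the mixture changes `∑ φ(pₖ)` by `Nₙ φ(δₙ)` up to errors
controlled by `Nₙ δₙ` and by the tail `∑_{k ≥ n} φ(pₖ)`. Since `φ x / x → ∞` as `x → 0⁺`,
`Nₙ δₙ → 0` is compatible with `Nₙ φ(δₙ) → C` for any prescribed `C ∈ [0, ∞]`. For `α < 1`,
`H_α = log (∑ pₖ ^ α) / (1 - α)` is continuous in the sum, and raising the sum `S` to
`S e^{(1 - α) r}` raises `H_α` by `r`.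
-/

open Filter Topology
open scoped ENNReal

/-- A probability distribution over the positive integers (indexed by `ℕ`):
nonnegative masses summing to `1`. -/
def IsProbDist (p : ℕ → ℝ) : Prop :=
  (∀ n, 0 ≤ p n) ∧ HasSum p 1

/-- The sum `∑ pₙ^α`, computed in `[0,∞]`, with the convention `0^0 = 0`. -/
noncomputable def renyiSum (p : ℕ → ℝ) (α : ℝ) : ℝ≥0∞ :=
  ∑' n, if p n = 0 then 0 else ENNReal.ofReal (p n ^ α)

/-- The Shannon entropy `H₁(P) = -∑ pₙ log pₙ`, valued in `[0,∞]`. -/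
noncomputable def shannonEntropy (p : ℕ → ℝ) : ℝ≥0∞ :=
  ∑' n, ENNReal.ofReal (-(p n * Real.log (p n)))

/-- The Rényi entropy `H_α(P)`, valued in `[0,∞]`: for `α ≠ 1` it is
`(1/(1-α)) log ∑ pₙ^α` (equal to `∞` when the sum diverges), and for `α = 1`
it is the Shannon entropy. -/
noncomputable def renyiEntropy (p : ℕ → ℝ) (α : ℝ) : ℝ≥0∞ :=
  if α = 1 then shannonEntropy p
  else if renyiSum p α = ∞ then ∞
  else ENNReal.ofReal ((1 - α)⁻¹ * Real.log (renyiSum p α).toReal)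

/-- The region of convergence `R(P) = {α ≥ 0 : H_α(P) < ∞}`. -/
def convRegion (p : ℕ → ℝ) : Set ℝ :=
  {α : ℝ | 0 ≤ α ∧ renyiEntropy p α < ∞}

/-- The critical exponent `α_c(P) = inf {α ≥ 0 : H_α(P) < ∞}`. -/
noncomputable def criticalExponent (p : ℕ → ℝ) : ℝ :=
  sInf (convRegion p)

/-- The total variation distance `d_TV(P,Q) = ∑ |pₙ - qₙ|`. -/
noncomputable def dTV (p q : ℕ → ℝ) : ℝ :=
  ∑' n, |p n - q n|

namespace ConcaveOn

variable {f : ℝ → ℝ}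

theorem mul_map_le_map_mul (hf : ConcaveOn ℝ (Set.Ici 0) f) (h0 : 0 ≤ f 0) {c x : ℝ}
    (hc0 : 0 ≤ c) (hc1 : c ≤ 1) (hx : 0 ≤ x) : c * f x ≤ f (c * x) := by
  have h := hf.2 Set.self_mem_Ici (Set.mem_Ici.2 hx) (sub_nonneg.2 hc1) hc0 (sub_add_cancel 1 c)
  simp only [smul_eq_mul, mul_zero, zero_add] at h
  nlinarith [mul_nonneg (sub_nonneg.2 hc1) h0]

theorem map_add_le (hf : ConcaveOn ℝ (Set.Ici 0) f) (h0 : 0 ≤ f 0) {x y : ℝ}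
    (hx : 0 ≤ x) (hy : 0 ≤ y) : f (x + y) ≤ f x + f y := by
  rcases (add_nonneg hx hy).eq_or_lt with hs | hs
  · obtain ⟨rfl, rfl⟩ : x = 0 ∧ y = 0 := ⟨by linarith, by linarith⟩
    simpa using h0
  have key : ∀ t, 0 ≤ t → t ≤ x + y → t / (x + y) * f (x + y) ≤ f t := fun t ht hts => by
    simpa [div_mul_cancel₀ t hs.ne'] using hf.mul_map_le_map_mul h0 (div_nonneg ht hs.le)
      ((div_le_one hs).2 hts) hs.le
  calc f (x + y) = x / (x + y) * f (x + y) + y / (x + y) * f (x + y) := by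
        rw [← add_mul, ← add_div, div_self hs.ne', one_mul]
    _ ≤ f x + f y := add_le_add (key x hx (by linarith)) (key y hy (by linarith))

end ConcaveOn

theorem hasSum_ite_mem_Ico {M : Type*} [AddCommMonoid M] [TopologicalSpace M]
    (a m : ℕ) (v : M) :
    HasSum (fun k => if k ∈ Finset.Ico a (a + m) then v else 0) (m • v) := by
  convert hasSum_sum_of_ne_finset_zero (L := SummationFilter.unconditional ℕ)
    (s := Finset.Ico a (a + m)) (fun k hk => if_neg hk)
  rw [Finset.sum_ite_of_true (fun _ hk => hk), Finset.sum_const, Nat.card_Ico,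
    Nat.add_sub_cancel_left]

theorem IsProbDist.le_one {p : ℕ → ℝ} (hp : IsProbDist p) (k : ℕ) : p k ≤ 1 :=
  le_hasSum hp.2 k fun i _ => hp.1 i

theorem IsProbDist.tsum_ofReal {p : ℕ → ℝ} (hp : IsProbDist p) :
    ∑' k, ENNReal.ofReal (p k) = 1 := by
  rw [← ENNReal.ofReal_tsum_of_nonneg hp.1 hp.2.summable, hp.2.tsum_eq, ENNReal.ofReal_one]

namespace ENNReal

theorem tsum_ite_mem_Ico (a m : ℕ) (v : ℝ≥0∞) :
    ∑' k, (if k ∈ Finset.Ico a (a + m) then v else 0) = m * v :=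
  (hasSum_ite_mem_Ico a m v).tsum_eq.trans (nsmul_eq_mul _ _)

theorem tsum_ite_mem_Ico_le_tsum_nat_add (g : ℕ → ℝ≥0∞) (a m : ℕ) :
    ∑' k, (if k ∈ Finset.Ico a (a + m) then g k else 0) ≤ ∑' i, g (i + a) := by
  rw [tsum_eq_sum (s := Finset.Ico a (a + m)) fun k hk => if_neg hk,
    Finset.sum_ite_of_true fun _ hk => hk, Finset.sum_Ico_eq_sum_range]
  simp_rw [add_comm a]
  exact ENNReal.sum_le_tsum _

end ENNReal

noncomputable def entropySum (φ : ℝ → ℝ) (p : ℕ → ℝ) : ℝ≥0∞ :=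
  ∑' k, ENNReal.ofReal (φ (p k))

noncomputable def mixUniform (p : ℕ → ℝ) (a m : ℕ) (δ : ℝ) (k : ℕ) : ℝ :=
  (1 - m * δ) * p k + if k ∈ Finset.Ico a (a + m) then δ else 0

section mixUniform

variable {φ : ℝ → ℝ} {p : ℕ → ℝ} {a m : ℕ} {δ : ℝ}

theorem isProbDist_mixUniform (hp : IsProbDist p) (hδ : 0 ≤ δ) (hmδ : m * δ ≤ 1) :
    IsProbDist (mixUniform p a m δ) := by
  refine ⟨fun k => ?_, ?_⟩
  · have := mul_nonneg (sub_nonneg.2 hmδ) (hp.1 k)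
    unfold mixUniform
    split_ifs <;> linarith
  · have h := (hp.2.mul_left (1 - m * δ)).add (hasSum_ite_mem_Ico a m δ)
    rwa [nsmul_eq_mul, mul_one, sub_add_cancel] at h

theorem dTV_mixUniform_le (hp : IsProbDist p) (hδ : 0 ≤ δ) :
    dTV (mixUniform p a m δ) p ≤ 2 * (m * δ) := by
  have hsum := (hp.2.mul_left (m * δ)).add (hasSum_ite_mem_Ico a m δ)
  have hle : ∀ k, |mixUniform p a m δ k - p k| ≤
      m * δ * p k + if k ∈ Finset.Ico a (a + m) then δ else 0 := fun k => by
    have hmδp : 0 ≤ m * δ * p k := by have := hp.1 k; positivity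
    have hb : 0 ≤ if k ∈ Finset.Ico a (a + m) then δ else 0 := by split_ifs <;> simp [hδ]
    rw [show mixUniform p a m δ k - p k =
        -(m * δ * p k) + if k ∈ Finset.Ico a (a + m) then δ else 0 by unfold mixUniform; ring]
    exact (abs_add_le _ _).trans (by rw [abs_neg, abs_of_nonneg hmδp, abs_of_nonneg hb])
  calc dTV (mixUniform p a m δ) p
      ≤ m * δ * 1 + m • δ :=
        (Summable.tsum_le_tsum hle (hsum.summable.of_nonneg_of_le (fun _ => abs_nonneg _) hle)
          hsum.summable).trans_eq hsum.tsum_eq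
    _ = 2 * (m * δ) := by rw [nsmul_eq_mul]; ring


theorem entropySum_mixUniform_le (hconc : ConcaveOn ℝ (Set.Ici 0) φ) (hφ0 : φ 0 = 0)
    (hslow : MonotoneOn (fun x => φ x + x) (Set.Icc 0 1)) (hp : IsProbDist p) (hδ : 0 ≤ δ)
    (hmδ : m * δ ≤ 1) :
    entropySum φ (mixUniform p a m δ) ≤
      entropySum φ p + ENNReal.ofReal (m * δ) + m * ENNReal.ofReal (φ δ) := by
  have hpoint : ∀ k, ENNReal.ofReal (φ (mixUniform p a m δ k)) ≤
      ENNReal.ofReal (φ (p k)) + ENNReal.ofReal (m * δ) * ENNReal.ofReal (p k) +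
        if k ∈ Finset.Ico a (a + m) then ENNReal.ofReal (φ δ) else 0 := fun k => by
    set b : ℝ := if k ∈ Finset.Ico a (a + m) then δ else 0
    have hpk := hp.1 k
    have hcp : (1 - m * δ) * p k ≤ p k := mul_le_of_le_one_left hpk (sub_le_self _ (by positivity))
    have hsub := hconc.map_add_le hφ0.ge (mul_nonneg (sub_nonneg.2 hmδ) hpk)
      (show 0 ≤ b by positivity)
    have hscale : φ ((1 - m * δ) * p k) + (1 - m * δ) * p k ≤ φ (p k) + p k :=
      hslow ⟨mul_nonneg (sub_nonneg.2 hmδ) hpk, hcp.trans (hp.le_one k)⟩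
        ⟨hpk, hp.le_one k⟩ hcp
    have hreal : φ (mixUniform p a m δ k) ≤ φ (p k) + m * δ * p k + φ b := by
      unfold mixUniform; linarith
    have hb : ENNReal.ofReal (φ b) = if k ∈ Finset.Ico a (a + m) then ENNReal.ofReal (φ δ)
        else 0 := by
      unfold b; split_ifs <;> simp [hφ0]
    rw [← hb, ← ENNReal.ofReal_mul (by positivity)]
    exact (ENNReal.ofReal_le_ofReal hreal).trans
      (ENNReal.ofReal_add_le.trans (add_le_add_left ENNReal.ofReal_add_le _))
  calc entropySum φ (mixUniform p a m δ)
      ≤ ∑' k, (ENNReal.ofReal (φ (p k)) + ENNReal.ofReal (m * δ) * ENNReal.ofReal (p k) +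
          if k ∈ Finset.Ico a (a + m) then ENNReal.ofReal (φ δ) else 0) :=
        ENNReal.tsum_le_tsum hpoint
    _ = entropySum φ p + ENNReal.ofReal (m * δ) + m * ENNReal.ofReal (φ δ) := by
        rw [ENNReal.tsum_add, ENNReal.tsum_add, ENNReal.tsum_mul_left, hp.tsum_ofReal, mul_one,
          ENNReal.tsum_ite_mem_Ico, entropySum]

theorem le_entropySum_mixUniform_add (hconc : ConcaveOn ℝ (Set.Ici 0) φ) (hφ0 : φ 0 = 0)
    {η : ℝ} (hmono : MonotoneOn φ (Set.Icc 0 η)) (hp : IsProbDist p) (hδ : 0 ≤ δ)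
    (hmδ : m * δ ≤ 1) (hbump : ∀ k ∈ Finset.Ico a (a + m), p k + δ ≤ η) :
    ENNReal.ofReal (1 - m * δ) * entropySum φ p + m * ENNReal.ofReal (φ δ) ≤
      entropySum φ (mixUniform p a m δ) + ∑' i, ENNReal.ofReal (φ (p (i + a))) := by
  have hc0 : 0 ≤ 1 - m * δ := sub_nonneg.2 hmδ
  have hc1 : 1 - m * δ ≤ 1 := sub_le_self _ (by positivity)
  have hpoint : ∀ k, ENNReal.ofReal (1 - m * δ) * ENNReal.ofReal (φ (p k)) +
      (if k ∈ Finset.Ico a (a + m) then ENNReal.ofReal (φ δ) else 0) ≤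
      ENNReal.ofReal (φ (mixUniform p a m δ k)) +
        if k ∈ Finset.Ico a (a + m) then ENNReal.ofReal (φ (p k)) else 0 := fun k => by
    have hpk := hp.1 k
    by_cases hk : k ∈ Finset.Ico a (a + m)
    · have hδφ : φ δ ≤ φ (mixUniform p a m δ k) := by
        have hcp := mul_le_of_le_one_left hpk hc1
        rw [mixUniform, if_pos hk]
        exact hmono ⟨hδ, by linarith [hbump k hk]⟩ ⟨by positivity, by linarith [hbump k hk]⟩
          (by linarith [mul_nonneg hc0 hpk])
      simp only [if_pos hk, add_comm (ENNReal.ofReal (φ (mixUniform p a m δ k)))]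
      gcongr
      exact mul_le_of_le_one_left' (ENNReal.ofReal_le_one.2 hc1)
    · simp only [if_neg hk, add_zero, mixUniform]
      rw [← ENNReal.ofReal_mul hc0]
      exact ENNReal.ofReal_le_ofReal (hconc.mul_map_le_map_mul hφ0.ge hc0 hc1 hpk)
  calc ENNReal.ofReal (1 - m * δ) * entropySum φ p + m * ENNReal.ofReal (φ δ)
      = ∑' k, (ENNReal.ofReal (1 - m * δ) * ENNReal.ofReal (φ (p k)) +
          if k ∈ Finset.Ico a (a + m) then ENNReal.ofReal (φ δ) else 0) := by
        rw [ENNReal.tsum_add, ENNReal.tsum_mul_left, ENNReal.tsum_ite_mem_Ico, entropySum]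
    _ ≤ ∑' k, (ENNReal.ofReal (φ (mixUniform p a m δ k)) +
          if k ∈ Finset.Ico a (a + m) then ENNReal.ofReal (φ (p k)) else 0) :=
        ENNReal.tsum_le_tsum hpoint
    _ ≤ entropySum φ (mixUniform p a m δ) + ∑' i, ENNReal.ofReal (φ (p (i + a))) := by
        rw [ENNReal.tsum_add, entropySum]
        exact add_le_add le_rfl (ENNReal.tsum_ite_mem_Ico_le_tsum_nat_add _ a m)

end mixUniform

theorem tendsto_entropySum_mixUniform {φ : ℝ → ℝ} {η : ℝ} (hconc : ConcaveOn ℝ (Set.Ici 0) φ)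
    (hφ0 : φ 0 = 0) (hη : 0 < η) (hmono : MonotoneOn φ (Set.Icc 0 η))
    (hslow : MonotoneOn (fun x => φ x + x) (Set.Icc 0 1)) {p : ℕ → ℝ} (hp : IsProbDist p)
    (hF : entropySum φ p ≠ ∞) {N : ℕ → ℕ} {δ : ℕ → ℝ} (hδ : ∀ n, 0 ≤ δ n)
    (hNδ : ∀ n, N n * δ n ≤ 1) (hδ0 : Tendsto δ atTop (𝓝 0))
    (hNδ0 : Tendsto (fun n => N n * δ n) atTop (𝓝 0)) {C : ℝ≥0∞}
    (hC : Tendsto (fun n => N n * ENNReal.ofReal (φ (δ n))) atTop (𝓝 C)) :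
    Tendsto (fun n => entropySum φ (mixUniform p n (N n) (δ n))) atTop
      (𝓝 (entropySum φ p + C)) := by
  have htail : Tendsto (fun n => ∑' i, ENNReal.ofReal (φ (p (i + n)))) atTop (𝓝 0) :=
    ENNReal.tendsto_sum_nat_add _ hF
  have hscale : Tendsto (fun n => ENNReal.ofReal (1 - N n * δ n)) atTop (𝓝 1) := by
    simpa using ENNReal.tendsto_ofReal (tendsto_const_nhds (x := (1 : ℝ)) |>.sub hNδ0)
  have hlower : Tendsto (fun n => ENNReal.ofReal (1 - N n * δ n) * entropySum φ p +
      N n * ENNReal.ofReal (φ (δ n)) - ∑' i, ENNReal.ofReal (φ (p (i + n)))) atTop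
      (𝓝 (entropySum φ p + C)) := by
    simpa using ENNReal.Tendsto.sub ((ENNReal.Tendsto.mul_const hscale (.inr hF)).add hC) htail
      (.inr ENNReal.zero_ne_top)
  have hupper : Tendsto (fun n => entropySum φ p + ENNReal.ofReal (N n * δ n) +
      N n * ENNReal.ofReal (φ (δ n))) atTop (𝓝 (entropySum φ p + C)) := by
    simpa using (tendsto_const_nhds.add (ENNReal.tendsto_ofReal hNδ0)).add hC
  have hbump : ∀ᶠ n in atTop, ∀ k ∈ Finset.Ico n (n + N n), p k + δ n ≤ η := by
    have hp0 : ∀ᶠ n in atTop, ∀ k, n ≤ k → p k ≤ η / 2 := eventually_forall_ge_atTop.2 <|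
      hp.2.summable.tendsto_atTop_zero.eventually (eventually_le_nhds (half_pos hη))
    filter_upwards [hp0, hδ0.eventually (eventually_le_nhds (half_pos hη))] with n hpn hδn k hk
    linarith [hpn k (Finset.mem_Ico.1 hk).1]
  refine tendsto_of_tendsto_of_tendsto_of_le_of_le' hlower hupper ?_
    (.of_forall fun n => entropySum_mixUniform_le hconc hφ0 hslow hp (hδ n) (hNδ n))
  filter_upwards [hbump] with n hn
  exact tsub_le_iff_right.2 (le_entropySum_mixUniform_add hconc hφ0 hmono hp (hδ n) (hNδ n) hn)

section ParameterChoice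

variable {φ : ℝ → ℝ}

theorem exists_natCast_mul_le_of_tendsto_div (hφ : Tendsto φ (𝓝[>] 0) (𝓝 0))
    (hslope : Tendsto (fun x => φ x / x) (𝓝[>] 0) atTop) {c ε : ℝ} (hc : 0 ≤ c)
    (hε : 0 < ε) :
    ∃ N : ℕ, ∃ x : ℝ, 0 < x ∧ x ≤ ε ∧ N * x ≤ ε ∧ c ≤ N * φ x ∧ N * φ x ≤ c + ε := by
  obtain ⟨x, hx, hxε, hφε, hφx⟩ : ∃ x : ℝ, 0 < x ∧ x ≤ ε / 2 ∧ φ x ≤ ε ∧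
      2 * (c + 1) / ε ≤ φ x / x :=
    (eventually_mem_nhdsWithin.and <|
      ((eventually_le_nhds (half_pos hε)).filter_mono nhdsWithin_le_nhds).and <|
      (hφ.eventually (eventually_le_nhds hε)).and
      (hslope.eventually (eventually_ge_atTop _))).exists
  rw [div_le_div_iff₀ hε hx] at hφx
  have hφpos : 0 < φ x := by nlinarith
  have hN := Nat.ceil_lt_add_one (div_nonneg hc hφpos.le)
  refine ⟨⌈c / φ x⌉₊, x, hx, by linarith, ?_, ?_, ?_⟩
  · calc (⌈c / φ x⌉₊ : ℝ) * x ≤ (c / φ x + 1) * x := by gcongr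
      _ = c * x / φ x + x := by ring
      _ ≤ ε / 2 + ε / 2 := by
          refine add_le_add ?_ hxε
          rw [div_le_iff₀ hφpos]
          nlinarith
      _ = ε := by ring
  · rw [← div_le_iff₀ hφpos]
    exact Nat.le_ceil _
  · calc (⌈c / φ x⌉₊ : ℝ) * φ x ≤ (c / φ x + 1) * φ x := by gcongr
      _ = c + φ x := by field_simp
      _ ≤ c + ε := by linarith

theorem exists_seq_tendsto_natCast_mul_ofReal (hcont : ContinuousAt φ 0) (hφ0 : φ 0 = 0)
    (hslope : Tendsto (fun x => φ x / x) (𝓝[>] 0) atTop) (C : ℝ≥0∞) :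
    ∃ (N : ℕ → ℕ) (δ : ℕ → ℝ), (∀ n, 0 ≤ δ n) ∧ (∀ n, N n * δ n ≤ 1) ∧
      Tendsto δ atTop (𝓝 0) ∧ Tendsto (fun n => N n * δ n) atTop (𝓝 0) ∧
      Tendsto (fun n => N n * ENNReal.ofReal (φ (δ n))) atTop (𝓝 C) := by
  -- `c n` are finite targets increasing to `C`, and `ε n` the tolerances
  set c : ℕ → ℝ := fun n => (min C n).toReal
  set ε : ℕ → ℝ := fun n => 1 / ((n : ℝ) + 1)
  have hε : Tendsto ε atTop (𝓝 0) := tendsto_one_div_add_atTop_nhds_zero_nat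
  have hcC : Tendsto (fun n => ENNReal.ofReal (c n)) atTop (𝓝 C) := by
    have h := tendsto_const_nhds (x := C) |>.min ENNReal.tendsto_nat_nhds_top
    rw [min_top_right] at h
    refine h.congr fun n => (ENNReal.ofReal_toReal ?_).symm
    exact ne_top_of_le_ne_top (ENNReal.natCast_ne_top n) (min_le_right _ _)
  have hφ : Tendsto φ (𝓝[>] 0) (𝓝 0) := by
    simpa only [hφ0] using hcont.tendsto.mono_left nhdsWithin_le_nhds
  choose N δ hδ hδε hNδ hlow hup using fun n =>
    exists_natCast_mul_le_of_tendsto_div hφ hslope (c := c n) ENNReal.toReal_nonneg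
      (Nat.one_div_pos_of_nat (n := n))
  refine ⟨N, δ, fun n => (hδ n).le, fun n => (hNδ n).trans
    (div_le_one_of_le₀ (le_add_of_nonneg_left n.cast_nonneg) (by positivity)),
    squeeze_zero (fun n => (hδ n).le) hδε hε,
    squeeze_zero (fun n => by have := hδ n; positivity) hNδ hε, ?_⟩
  have hNφ : ∀ n, (N n : ℝ≥0∞) * ENNReal.ofReal (φ (δ n)) = ENNReal.ofReal (N n * φ (δ n)) :=
    fun n => by rw [ENNReal.ofReal_mul (N n).cast_nonneg, ENNReal.ofReal_natCast]
  simp_rw [hNφ]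
  refine tendsto_of_tendsto_of_tendsto_of_le_of_le hcC ?_
    (fun n => ENNReal.ofReal_le_ofReal (hlow n))
    (fun n => (ENNReal.ofReal_le_ofReal (hup n)).trans ENNReal.ofReal_add_le)
  simpa only [ENNReal.ofReal_zero, add_zero] using hcC.add (ENNReal.tendsto_ofReal hε)

theorem exists_tendsto_entropySum_add {φ : ℝ → ℝ} {η : ℝ} (hconc : ConcaveOn ℝ (Set.Ici 0) φ)
    (hφ0 : φ 0 = 0) (hcont : ContinuousAt φ 0) (hη : 0 < η) (hmono : MonotoneOn φ (Set.Icc 0 η))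
    (hslow : MonotoneOn (fun x => φ x + x) (Set.Icc 0 1))
    (hslope : Tendsto (fun x => φ x / x) (𝓝[>] 0) atTop) {p : ℕ → ℝ} (hp : IsProbDist p)
    (hF : entropySum φ p ≠ ∞) (C : ℝ≥0∞) :
    ∃ P : ℕ → ℕ → ℝ, (∀ n, IsProbDist (P n)) ∧ Tendsto (fun n => dTV (P n) p) atTop (𝓝 0) ∧
      Tendsto (fun n => entropySum φ (P n)) atTop (𝓝 (entropySum φ p + C)) := by
  obtain ⟨N, δ, hδ, hNδ, hδ0, hNδ0, hC⟩ :=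
    exists_seq_tendsto_natCast_mul_ofReal hcont hφ0 hslope C
  refine ⟨fun n => mixUniform p n (N n) (δ n), fun n => isProbDist_mixUniform hp (hδ n) (hNδ n),
    ?_, tendsto_entropySum_mixUniform hconc hφ0 hη hmono hslow hp hF hδ hNδ hδ0 hNδ0 hC⟩
  refine squeeze_zero (fun n => tsum_nonneg fun _ => abs_nonneg _)
    (fun n => dTV_mixUniform_le hp (hδ n)) ?_
  simpa using hNδ0.const_mul 2

namespace Real

theorem monotoneOn_negMulLog : MonotoneOn negMulLog (Set.Icc 0 (exp (-1))) := by
  refine monotoneOn_of_hasDerivWithinAt_nonneg (f' := fun x => -log x - 1) (convex_Icc _ _)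
    continuous_negMulLog.continuousOn (fun x hx => ?_) (fun x hx => ?_) <;>
    rw [interior_Icc] at hx
  · exact (hasDerivAt_negMulLog hx.1.ne').hasDerivWithinAt
  · linarith [(log_lt_iff_lt_exp hx.1).2 hx.2]

theorem monotoneOn_negMulLog_add_self : MonotoneOn (fun x => negMulLog x + x) (Set.Icc 0 1) := by
  refine monotoneOn_of_hasDerivWithinAt_nonneg (f' := fun x => -log x - 1 + 1) (convex_Icc _ _)
    (continuous_negMulLog.add continuous_id).continuousOn (fun x hx => ?_) (fun x hx => ?_) <;>
    rw [interior_Icc] at hx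
  · exact ((hasDerivAt_negMulLog hx.1.ne').add (hasDerivAt_id x)).hasDerivWithinAt
  · linarith [log_neg hx.1 hx.2]

theorem tendsto_negMulLog_div_self : Tendsto (fun x => negMulLog x / x) (𝓝[>] 0) atTop := by
  refine (tendsto_neg_atBot_atTop.comp tendsto_log_nhdsGT_zero).congr' ?_
  filter_upwards [self_mem_nhdsWithin] with x (hx : 0 < x)
  rw [Function.comp_apply, negMulLog, neg_mul, neg_div, mul_div_cancel_left₀ _ hx.ne']

variable {α : ℝ}

theorem tendsto_rpow_div_self (hα : α < 1) : Tendsto (fun x : ℝ => x ^ α / x) (𝓝[>] 0) atTop := by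
  refine (tendsto_rpow_neg_nhdsGT_zero (sub_neg.2 hα)).congr' ?_
  filter_upwards [self_mem_nhdsWithin] with x (hx : 0 < x)
  rw [rpow_sub_one hx.ne']

theorem exists_tendsto_entropySum_rpow_add (hα0 : 0 < α) (hα1 : α < 1) {p : ℕ → ℝ}
    (hp : IsProbDist p) (hF : entropySum (· ^ α) p ≠ ∞) (C : ℝ≥0∞) :
    ∃ P : ℕ → ℕ → ℝ, (∀ n, IsProbDist (P n)) ∧ Tendsto (fun n => dTV (P n) p) atTop (𝓝 0) ∧
      Tendsto (fun n => entropySum (· ^ α) (P n)) atTop (𝓝 (entropySum (· ^ α) p + C)) :=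
  have hmono := monotoneOn_rpow_Ici_of_exponent_nonneg hα0.le
  exists_tendsto_entropySum_add (concaveOn_rpow hα0.le hα1.le) (zero_rpow hα0.ne')
    (continuousAt_rpow_const 0 α (.inr hα0.le)) one_pos (hmono.mono Set.Icc_subset_Ici_self)
    ((hmono.mono Set.Icc_subset_Ici_self).add monotoneOn_id) (tendsto_rpow_div_self hα1) hp hF C

theorem exists_tendsto_entropySum_negMulLog_add {p : ℕ → ℝ} (hp : IsProbDist p)
    (hF : entropySum negMulLog p ≠ ∞) (C : ℝ≥0∞) :
    ∃ P : ℕ → ℕ → ℝ, (∀ n, IsProbDist (P n)) ∧ Tendsto (fun n => dTV (P n) p) atTop (𝓝 0) ∧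
      Tendsto (fun n => entropySum negMulLog (P n)) atTop (𝓝 (entropySum negMulLog p + C)) :=
  exists_tendsto_entropySum_add concaveOn_negMulLog negMulLog_zero
    continuous_negMulLog.continuousAt (exp_pos _) monotoneOn_negMulLog
    monotoneOn_negMulLog_add_self tendsto_negMulLog_div_self hp hF C

end Real

theorem renyiSum_eq_entropySum (p : ℕ → ℝ) {α : ℝ} (hα : α ≠ 0) :
    renyiSum p α = entropySum (· ^ α) p := by
  refine tsum_congr fun k => ?_
  split_ifs with hk
  · simp [hk, Real.zero_rpow hα]
  · rfl

theorem shannonEntropy_eq_entropySum (p : ℕ → ℝ) :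
    shannonEntropy p = entropySum Real.negMulLog p := by
  simp [shannonEntropy, entropySum, Real.negMulLog_eq_neg]

theorem one_le_renyiSum {p : ℕ → ℝ} (hp : IsProbDist p) {α : ℝ} (hα0 : 0 < α) (hα1 : α ≤ 1) :
    1 ≤ renyiSum p α := by
  rw [renyiSum_eq_entropySum p hα0.ne', ← hp.tsum_ofReal]
  exact ENNReal.tsum_le_tsum fun k =>
    ENNReal.ofReal_le_ofReal (Real.self_le_rpow_of_le_one (hp.1 k) (hp.le_one k) hα1)

noncomputable def renyiEntropyOfSum (α : ℝ) (S : ℝ≥0∞) : ℝ≥0∞ :=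
  if S = ∞ then ∞ else ENNReal.ofReal ((1 - α)⁻¹ * Real.log S.toReal)

section renyiEntropyOfSum

variable {α : ℝ}

theorem renyiEntropy_eq_renyiEntropyOfSum (p : ℕ → ℝ) (hα : α ≠ 1) :
    renyiEntropy p α = renyiEntropyOfSum α (renyiSum p α) := by
  simp [renyiEntropy, renyiEntropyOfSum, hα]

theorem continuousAt_renyiEntropyOfSum (hα : α < 1) {S : ℝ≥0∞} (hS : S ≠ 0) :
    ContinuousAt (renyiEntropyOfSum α) S := by
  have ha : 0 < (1 - α)⁻¹ := inv_pos.2 (sub_pos.2 hα)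
  rcases eq_or_ne S ∞ with rfl | hS'
  · rw [ContinuousAt, renyiEntropyOfSum, if_pos rfl, ENNReal.tendsto_nhds_top_iff_nnreal]
    intro b
    filter_upwards [Ioi_mem_nhds (ENNReal.ofReal_lt_top (r := Real.exp (b / (1 - α)⁻¹)))]
      with T (hT : _ < T)
    rw [renyiEntropyOfSum]
    split_ifs with hT'
    · exact ENNReal.coe_lt_top
    have hexp := (ENNReal.ofReal_lt_iff_lt_toReal (Real.exp_pos _).le hT').1 hT
    have hlog : (b : ℝ) < (1 - α)⁻¹ * Real.log T.toReal := by
      rwa [← div_lt_iff₀' ha, Real.lt_log_iff_exp_lt ((Real.exp_pos _).trans hexp)]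
    rw [← ENNReal.ofReal_coe_nnreal]
    exact (ENNReal.ofReal_lt_ofReal_iff (b.2.trans_lt hlog)).2 hlog
  · have hcont : ContinuousAt (fun T : ℝ≥0∞ => ENNReal.ofReal ((1 - α)⁻¹ * Real.log T.toReal)) S :=
      ENNReal.continuous_ofReal.continuousAt.comp <| continuousAt_const.mul <|
        (Real.continuousAt_log (ENNReal.toReal_ne_zero.2 ⟨hS, hS'⟩)).comp
          (ENNReal.tendsto_toReal hS')
    refine hcont.congr (Filter.EventuallyEq.symm ?_)
    filter_upwards [eventually_ne_nhds hS'] with T hT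
    exact if_neg hT

/-- Multiplying `S` by `exp ((1 - α) r)` raises `renyiEntropyOfSum α S` by exactly `r`. -/
theorem exists_renyiEntropyOfSum_add_eq (hα : α < 1) {S : ℝ≥0∞} (hS1 : 1 ≤ S) (hS : S ≠ ∞)
    (r : ℝ≥0∞) : ∃ C, renyiEntropyOfSum α (S + C) = renyiEntropyOfSum α S + r := by
  rcases eq_or_ne r ∞ with rfl | hr
  · exact ⟨∞, by simp [renyiEntropyOfSum]⟩
  have hS0 : 0 < S.toReal := ENNReal.toReal_pos (one_pos.trans_le hS1).ne' hS
  have hlogS : 0 ≤ Real.log S.toReal :=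
    Real.log_nonneg (by simpa using ENNReal.toReal_mono hS hS1)
  set E := Real.exp ((1 - α) * r.toReal)
  have hE : 1 ≤ E := Real.one_le_exp (mul_nonneg (sub_pos.2 hα).le ENNReal.toReal_nonneg)
  have hsum : S + ENNReal.ofReal (S.toReal * (E - 1)) = ENNReal.ofReal (S.toReal * E) := by
    nth_rw 1 [← ENNReal.ofReal_toReal hS]
    rw [← ENNReal.ofReal_add hS0.le (mul_nonneg hS0.le (sub_nonneg.2 hE))]
    ring_nf
  refine ⟨ENNReal.ofReal (S.toReal * (E - 1)), ?_⟩
  rw [hsum, renyiEntropyOfSum, if_neg ENNReal.ofReal_ne_top, renyiEntropyOfSum, if_neg hS,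
    ENNReal.toReal_ofReal (by positivity), Real.log_mul hS0.ne' (by positivity), Real.log_exp,
    mul_add, inv_mul_cancel_left₀ (sub_pos.2 hα).ne',
    ENNReal.ofReal_add (mul_nonneg (inv_pos.2 (sub_pos.2 hα)).le hlogS) ENNReal.toReal_nonneg,
    ENNReal.ofReal_toReal hr]

end renyiEntropyOfSum

theorem exists_tendsto_renyiEntropy_add_of_lt_one {α : ℝ} (hα0 : 0 < α) (hα1 : α < 1)
    {p : ℕ → ℝ} (hp : IsProbDist p) (hH : renyiEntropy p α ≠ ∞) (r : ℝ≥0∞) :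
    ∃ P : ℕ → ℕ → ℝ, (∀ n, IsProbDist (P n)) ∧ Tendsto (fun n => dTV (P n) p) atTop (𝓝 0) ∧
      Tendsto (fun n => renyiEntropy (P n) α) atTop (𝓝 (renyiEntropy p α + r)) := by
  have hS : renyiSum p α ≠ ∞ := fun h => hH (by simp [renyiEntropy, hα1.ne, h])
  have hS1 := one_le_renyiSum hp hα0 hα1.le
  obtain ⟨C, hC⟩ := exists_renyiEntropyOfSum_add_eq hα1 hS1 hS r
  rw [renyiSum_eq_entropySum p hα0.ne'] at hS hS1 hC
  obtain ⟨P, hP, hdTV, hlim⟩ := Real.exists_tendsto_entropySum_rpow_add hα0 hα1 hp hS C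
  refine ⟨P, hP, hdTV, ?_⟩
  simp_rw [renyiEntropy_eq_renyiEntropyOfSum _ hα1.ne, renyiSum_eq_entropySum _ hα0.ne', ← hC]
  exact (continuousAt_renyiEntropyOfSum hα1
    (one_pos.trans_le (hS1.trans le_self_add)).ne').tendsto.comp hlim

/-- For `α ∈ (0,1]`, any distribution `P`, and any `r ∈ [0,∞]`,
there is a sequence of distributions `Pₙ` with `d_TV(Pₙ,P) → 0` such that
`lim H_α(Pₙ) = H_α(P) + r` (arithmetic in `[0,∞]`). -/
theorem stmt14 (α : ℝ) (hα0 : 0 < α) (hα1 : α ≤ 1)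
    (p : ℕ → ℝ) (hp : IsProbDist p) (r : ℝ≥0∞) :
    ∃ P : ℕ → ℕ → ℝ, (∀ n, IsProbDist (P n)) ∧
      Tendsto (fun n => dTV (P n) p) atTop (𝓝 0) ∧
      Tendsto (fun n => renyiEntropy (P n) α) atTop
        (𝓝 (renyiEntropy p α + r)) := by
  by_cases hH : renyiEntropy p α = ∞
  · exact ⟨fun _ => p, fun _ => hp, by simp [dTV], by simp [hH]⟩
  rcases hα1.lt_or_eq with hα1 | rfl
  · exact exists_tendsto_renyiEntropy_add_of_lt_one hα0 hα1 hp hH r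
  · simp only [renyiEntropy, if_true, shannonEntropy_eq_entropySum] at hH ⊢
    exact Real.exists_tendsto_entropySum_negMulLog_add hp hH r
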